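/- arXiv:2601.20983 — 3 statements merged into one kernel-verified Lean document; each statement's English description precedes it below -/
import Mathlib

section
/- For an increasing function g : ℝ₊ⁿ → ℝ, the radial inverse is right-continuous in y: for every x ∈ ℝ₊ⁿ and y ∈ ℝ, lim_{ε ↓ 0} ρ_g(x, y+ε) = ρ_g(x, y) (in the extended reals [0,∞]). -/
open scoped ENNReal

noncomputable def radInv {n : ℕ} (g : (Fin n → ℝ) → ℝ) (x : Fin n → ℝ) (y : ℝ) : ℝ≥0∞ :=
  sInf (ENNReal.ofReal '' {r : ℝ | 0 < r ∧ g (r⁻¹ • x) ≤ y})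

/-!
The radial inverse is antitone in `y`, so it suffices to show that `ρ_g(x, y)` is the supremum
of the values `ρ_g(x, y')`, `y' > y`. If a real `t` exceeds that supremum, then for each `ε > 0`
some `r < t` has `g (x / r) ≤ y + ε`, and since `g` is increasing on the orthant,
`g (x / t) ≤ g (x / r) ≤ y + ε`; letting `ε → 0` gives `g (x / t) ≤ y`, i.e. `ρ_g(x, y) ≤ t`.
-/

open Set Filter Topology

section RadialInverse

variable {n : ℕ} {g : (Fin n → ℝ) → ℝ} {x : Fin n → ℝ}

lemma radInv_antitone (g : (Fin n → ℝ) → ℝ) (x : Fin n → ℝ) : Antitone (radInv g x) :=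
  fun _ _ hyy' ↦ sInf_le_sInf <| image_mono fun _ hr ↦ ⟨hr.1, hr.2.trans hyy'⟩

lemma radInv_le_ofReal {y t : ℝ} (ht : 0 < t) (hgt : g (t⁻¹ • x) ≤ y) :
    radInv g x y ≤ ENNReal.ofReal t :=
  sInf_le ⟨t, ⟨ht, hgt⟩, rfl⟩

lemma apply_inv_smul_le_of_radInv_lt (hg : MonotoneOn g (Ici 0)) (hx : 0 ≤ x) {y t : ℝ}
    (h : radInv g x y < ENNReal.ofReal t) : g (t⁻¹ • x) ≤ y := by
  obtain ⟨_, ⟨r, ⟨hr, hgr⟩, rfl⟩, hrt⟩ := sInf_lt_iff.mp h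
  have hrt : r < t := (ENNReal.ofReal_lt_ofReal_iff'.mp hrt).1
  have hsmul : t⁻¹ • x ≤ r⁻¹ • x := smul_le_smul_of_nonneg_right (inv_anti₀ hr hrt.le) hx
  exact (hg (smul_nonneg (inv_nonneg.mpr (hr.trans hrt).le) hx)
    (smul_nonneg (inv_nonneg.mpr hr.le) hx) hsmul).trans hgr

lemma sSup_radInv_Ioi (hg : MonotoneOn g (Ici 0)) (hx : 0 ≤ x) (y : ℝ) :
    sSup (radInv g x '' Ioi y) = radInv g x y := by
  refine le_antisymm (sSup_le ?_) (le_of_forall_gt_imp_ge_of_dense fun c hc ↦ ?_)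
  · rintro _ ⟨y', hy', rfl⟩
    exact radInv_antitone g x (le_of_lt hy')
  rcases eq_or_ne c ∞ with rfl | hc_top
  · exact le_top
  set t := c.toReal
  have hct : ENNReal.ofReal t = c := ENNReal.ofReal_toReal hc_top
  have hgt : g (t⁻¹ • x) ≤ y := by
    refine le_of_forall_pos_le_add fun ε hε ↦ apply_inv_smul_le_of_radInv_lt hg hx ?_
    rw [hct]
    exact (le_sSup (mem_image_of_mem _ (lt_add_of_pos_right y hε))).trans_lt hc
  rw [← hct]
  exact radInv_le_ofReal (ENNReal.toReal_pos (pos_of_gt hc).ne' hc_top) hgt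

lemma continuousWithinAt_radInv_Ioi (hg : MonotoneOn g (Ici 0)) (hx : 0 ≤ x) (y : ℝ) :
    ContinuousWithinAt (radInv g x) (Ioi y) y := by
  have := (radInv_antitone g x).tendsto_nhdsGT y
  rwa [sSup_radInv_Ioi hg hx] at this

end RadialInverse

theorem stmt3 {n : ℕ} (g : (Fin n → ℝ) → ℝ)
    (hg : ∀ a b : Fin n → ℝ, 0 ≤ a → a ≤ b → g a ≤ g b)
    (x : Fin n → ℝ) (hx : 0 ≤ x) (y : ℝ) :
    Filter.Tendsto (fun ε : ℝ => radInv g x (y + ε)) (nhdsWithin 0 (Set.Ioi 0))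
      (nhds (radInv g x y)) := by
  have hshift : Tendsto (y + ·) (𝓝[>] 0) (𝓝[>] y) := by
    have h := map_add_left_nhdsGT (c := y) (a := (0 : ℝ))
    rw [add_zero] at h
    exact h.le
  exact (continuousWithinAt_radInv_Ioi (fun a ha _ _ hab ↦ hg a _ ha hab) hx y).tendsto.comp hshift
end

section
/- Let g₁,…,g_m : ℝ₊ⁿ → ℝ be increasing functions and u₁,…,u_m ∈ ℝ, and let 𝒢 = {x ∈ ℝ₊ⁿ : gᵢ(x) ≤ uᵢ for all i}. If 𝒢 is compact and nonempty, then for every x ∈ ℝ₊ⁿ, the monotone projection satisfies π_𝒢(x) = (max_{i∈[m]} ρ_{gᵢ}(x, uᵢ))⁻¹ · x, where ρ_{gᵢ}(x, uᵢ) = inf{r > 0 : gᵢ(x/r) ≤ uᵢ}. -/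
open scoped ENNReal

/-!
With `ρ = maxᵢ ρ_{gᵢ}(x, uᵢ)`, monotonicity of the `gᵢ` squeezes membership `a • x ∈ 𝒢` (for `a > 0`)
between `ρ < a⁻¹` and `ρ ≤ a⁻¹`. Compactness of `𝒢` makes `{a ≥ 0 | a • x ∈ 𝒢}` compact, so its
supremum `s` is attained, and the squeeze forces `s = ρ⁻¹` in `[0, ∞]`.
-/

open Set

lemma IsCompact.setOf_nonneg_smul_mem {E : Type*} [NormedAddCommGroup E] [NormedSpace ℝ E]
    {G : Set E} (hG : IsCompact G) {x : E} (hx : x ≠ 0) :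
    IsCompact {a : ℝ | 0 ≤ a ∧ a • x ∈ G} :=
  ((isClosedEmbedding_smul_left hx).isCompact_preimage hG).inter_left isClosed_Ici

lemma IsCompact.sSup_eq_toReal {A : Set ℝ} {σ : ℝ≥0∞} (hA : IsCompact A)
    (hA₀ : ∀ a ∈ A, 0 ≤ a) (hle : ∀ a ∈ A, 0 < a → ENNReal.ofReal a ≤ σ)
    (hmem : ∀ a, 0 < a → ENNReal.ofReal a < σ → a ∈ A) :
    sSup A = σ.toReal := by
  have hs₀ : 0 ≤ sSup A := Real.sSup_nonneg hA₀
  suffices ENNReal.ofReal (sSup A) = σ by rw [← this, ENNReal.toReal_ofReal hs₀]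
  apply le_antisymm
  · rcases hs₀.eq_or_lt with hs | hs
    · simp [← hs]
    · have hne : A.Nonempty := by
        by_contra h
        simp [not_nonempty_iff_eq_empty.mp h] at hs
      exact hle _ (hA.sSup_mem hne) hs
  · by_contra! h
    obtain ⟨a, -, hsa, haσ⟩ := ENNReal.lt_iff_exists_real_btwn.mp h
    have ha : sSup A < a := (ENNReal.ofReal_lt_ofReal_iff_of_nonneg hs₀).mp hsa
    exact ha.not_ge (le_csSup hA.bddAbove (hmem a (hs₀.trans_lt ha) haσ))

section radInv

variable {n : ℕ} {g : (Fin n → ℝ) → ℝ} {x : Fin n → ℝ} {y a : ℝ}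

lemma radInv_le_inv_ofReal (ha : 0 < a) (h : g (a • x) ≤ y) :
    radInv g x y ≤ (ENNReal.ofReal a)⁻¹ := by
  rw [← ENNReal.ofReal_inv_of_pos ha]
  exact sInf_le ⟨a⁻¹, ⟨inv_pos.mpr ha, by rwa [inv_inv]⟩, rfl⟩

lemma apply_smul_le_of_radInv_lt (hg : MonotoneOn g (Ici 0)) (hx : 0 ≤ x) (ha : 0 < a)
    (h : radInv g x y < (ENNReal.ofReal a)⁻¹) : g (a • x) ≤ y := by
  rw [← ENNReal.ofReal_inv_of_pos ha] at h
  obtain ⟨_, ⟨r, ⟨hr, hgr⟩, rfl⟩, hr_lt⟩ := sInf_lt_iff.mp h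
  have hra : r < a⁻¹ := (ENNReal.ofReal_lt_ofReal_iff (inv_pos.mpr ha)).mp hr_lt
  have hle : a • x ≤ r⁻¹ • x :=
    smul_le_smul_of_nonneg_right ((lt_inv_comm₀ hr ha).mp hra).le hx
  exact (hg (smul_nonneg ha.le hx) (smul_nonneg (inv_pos.mpr hr).le hx) hle).trans hgr

end radInv

theorem stmt6_general {n m : ℕ}
    (g : Fin m → (Fin n → ℝ) → ℝ) (u : Fin m → ℝ)
    (hg : ∀ i, ∀ a b : Fin n → ℝ, 0 ≤ a → a ≤ b → g i a ≤ g i b)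
    (G : Set (Fin n → ℝ))
    (hG : G = {x : Fin n → ℝ | 0 ≤ x ∧ ∀ i, g i x ≤ u i})
    (hcomp : IsCompact G)
    (x : Fin n → ℝ) (hx : 0 ≤ x) :
    sSup {a : ℝ | 0 ≤ a ∧ a • x ∈ G} • x
      = ((⨆ i, radInv (g i) x (u i))⁻¹).toReal • x := by
  rcases eq_or_ne x 0 with rfl | hx₀
  · simp
  have hsmul_mem : ∀ a : ℝ, 0 < a → (a • x ∈ G ↔ ∀ i, g i (a • x) ≤ u i) := fun a ha => by
    simp [hG, smul_nonneg ha.le hx]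
  congr 1
  refine (hcomp.setOf_nonneg_smul_mem hx₀).sSup_eq_toReal (fun a ha => ha.1)
    (fun a ha ha₀ => ?_) (fun a ha₀ ha => ⟨ha₀.le, (hsmul_mem a ha₀).mpr fun i => ?_⟩)
  · rw [ENNReal.le_inv_iff_le_inv, iSup_le_iff]
    exact fun i => radInv_le_inv_ofReal ha₀ ((hsmul_mem a ha₀).mp ha.2 i)
  · rw [ENNReal.lt_inv_iff_lt_inv] at ha
    exact apply_smul_le_of_radInv_lt (fun a ha b _ hab => hg i a b ha hab) hx ha₀
      ((le_iSup (fun i => radInv (g i) x (u i)) i).trans_lt ha)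

theorem stmt6 {n m : ℕ} (hm : 0 < m)
    (g : Fin m → (Fin n → ℝ) → ℝ) (u : Fin m → ℝ)
    (hg : ∀ i, ∀ a b : Fin n → ℝ, 0 ≤ a → a ≤ b → g i a ≤ g i b)
    (G : Set (Fin n → ℝ))
    (hG : G = {x : Fin n → ℝ | 0 ≤ x ∧ ∀ i, g i x ≤ u i})
    (hcomp : IsCompact G) (hne : G.Nonempty)
    (x : Fin n → ℝ) (hx : 0 ≤ x) :
    sSup {a : ℝ | 0 ≤ a ∧ a • x ∈ G} • x
      = ((⨆ i, radInv (g i) x (u i))⁻¹).toReal • x :=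
  stmt6_general g u hg G hG hcomp x hx
end

section
/- Let h : ℝ₊ⁿ × ℝ → [0,∞] satisfy: (i) h(αx, y) = α·h(x, y) for all α > 0; (ii) h is increasing in x and decreasing in y; (iii) h is right-continuous in y; (iv) for all x there exist y > y' with h(x,y) ≤ 1 and h(x,y') > 1. Then there exists an increasing function g : ℝ₊ⁿ → ℝ such that h = ρ_g, i.e., h(x,y) = inf{r > 0 : g(x/r) ≤ y} for all (x,y). Moreover, g can be taken as g(x) = inf{y ∈ ℝ : h(x,y) ≤ 1}. -/
open scoped ENNReal

open Filter Topology

theorem Antitone.bddBelow_setOf_le {α β : Type*} [LinearOrder α] [Preorder β]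
    {φ : α → β} {c : β} {y₀ : α} (hφ : Antitone φ) (hy₀ : c < φ y₀) :
    BddBelow {y | φ y ≤ c} :=
  ⟨y₀, fun _ hy => le_of_not_gt fun hlt => ((hφ hlt.le).trans hy).not_gt hy₀⟩

theorem Antitone.le_iff_csInf_setOf_le_le {β : Type*} [TopologicalSpace β] [Preorder β]
    [ClosedIicTopology β] {φ : ℝ → β} {c : β} {y : ℝ} (hφ : Antitone φ)
    (hrc : Tendsto (fun ε => φ (y + ε)) (𝓝[>] 0) (𝓝 (φ y)))
    (hne : {y | φ y ≤ c}.Nonempty) (hbdd : BddBelow {y | φ y ≤ c}) :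
    φ y ≤ c ↔ sInf {y | φ y ≤ c} ≤ y := by
  refine ⟨fun hy => csInf_le hbdd hy, fun hy => _root_.le_of_tendsto hrc ?_⟩
  filter_upwards [self_mem_nhdsWithin] with ε (hε : 0 < ε)
  obtain ⟨s, hs, hsy⟩ := exists_lt_of_csInf_lt hne (hy.trans_lt (lt_add_of_pos_right y hε))
  exact (hφ hsy.le).trans hs

theorem ENNReal.ofReal_inv_mul_le_one_iff {r : ℝ} (hr : 0 < r) {a : ℝ≥0∞} :
    ENNReal.ofReal r⁻¹ * a ≤ 1 ↔ a ≤ ENNReal.ofReal r := by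
  rw [ENNReal.ofReal_inv_of_pos hr,
    ENNReal.inv_mul_le_iff (ENNReal.ofReal_pos.2 hr).ne' ENNReal.ofReal_ne_top, mul_one]

theorem ENNReal.sInf_image_ofReal_setOf_pos_le (a : ℝ≥0∞) :
    sInf (ENNReal.ofReal '' {r : ℝ | 0 < r ∧ a ≤ ENNReal.ofReal r}) = a := by
  refine le_antisymm (le_of_forall_gt fun b hab => ?_) (le_sInf ?_)
  · obtain ⟨r, -, har, hrb⟩ := ENNReal.lt_iff_exists_real_btwn.1 hab
    exact sInf_lt_iff.2
      ⟨_, ⟨r, ⟨ENNReal.ofReal_pos.1 (lt_of_le_of_lt bot_le har), har.le⟩, rfl⟩, hrb⟩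
  · rintro _ ⟨r, ⟨-, har⟩, rfl⟩
    exact har

theorem radInv_eq_of_forall_pos {n : ℕ} {g : (Fin n → ℝ) → ℝ} {x : Fin n → ℝ} {y : ℝ}
    {a : ℝ≥0∞} (hga : ∀ r : ℝ, 0 < r → (g (r⁻¹ • x) ≤ y ↔ a ≤ ENNReal.ofReal r)) :
    radInv g x y = a := by
  have hset : {r : ℝ | 0 < r ∧ g (r⁻¹ • x) ≤ y} = {r : ℝ | 0 < r ∧ a ≤ ENNReal.ofReal r} :=
    Set.ext fun r => and_congr_right (hga r)
  rw [radInv, hset, ENNReal.sInf_image_ofReal_setOf_pos_le]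

theorem stmt7 {n : ℕ} (h : (Fin n → ℝ) → ℝ → ℝ≥0∞)
    (hhom : ∀ α : ℝ, 0 < α → ∀ x : Fin n → ℝ, 0 ≤ x → ∀ y : ℝ,
      h (α • x) y = ENNReal.ofReal α * h x y)
    (hmonox : ∀ x x' : Fin n → ℝ, 0 ≤ x → x ≤ x' → ∀ y : ℝ, h x y ≤ h x' y)
    (hmonoy : ∀ x : Fin n → ℝ, 0 ≤ x → ∀ y y' : ℝ, y ≤ y' → h x y' ≤ h x y)
    (hrc : ∀ x : Fin n → ℝ, 0 ≤ x → ∀ y : ℝ,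
      Filter.Tendsto (fun ε : ℝ => h x (y + ε)) (nhdsWithin 0 (Set.Ioi 0)) (nhds (h x y)))
    (hwp : ∀ x : Fin n → ℝ, 0 ≤ x → ∃ y y' : ℝ, y' < y ∧ h x y ≤ 1 ∧ 1 < h x y') :
    ∃ g : (Fin n → ℝ) → ℝ,
      (∀ a b : Fin n → ℝ, 0 ≤ a → a ≤ b → g a ≤ g b) ∧
      (∀ x : Fin n → ℝ, 0 ≤ x → ∀ y : ℝ, h x y = radInv g x y) ∧
      (∀ x : Fin n → ℝ, 0 ≤ x → g x = sInf {y : ℝ | h x y ≤ 1}) := by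
  set g : (Fin n → ℝ) → ℝ := fun x => sInf {y : ℝ | h x y ≤ 1}
  have hanti (x) (hx : 0 ≤ x) : Antitone (h x) := fun y y' => hmonoy x hx y y'
  have hne (x) (hx : 0 ≤ x) : {y | h x y ≤ 1}.Nonempty := by
    obtain ⟨y, -, -, hy, -⟩ := hwp x hx
    exact ⟨y, hy⟩
  have hbdd (x) (hx : 0 ≤ x) : BddBelow {y | h x y ≤ 1} := by
    obtain ⟨-, y', -, -, hy'⟩ := hwp x hx
    exact (hanti x hx).bddBelow_setOf_le hy'
  have hsub (x) (hx : 0 ≤ x) (y) : h x y ≤ 1 ↔ g x ≤ y :=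
    (hanti x hx).le_iff_csInf_setOf_le_le (hrc x hx y) (hne x hx) (hbdd x hx)
  refine ⟨g, fun a b ha hab => ?_, fun x hx y => ?_, fun _ _ => rfl⟩
  · exact csInf_le_csInf (hbdd a ha) (hne b (ha.trans hab))
      fun z hz => (hmonox a b ha hab z).trans hz
  · refine (radInv_eq_of_forall_pos fun r hr => ?_).symm
    rw [← hsub _ (smul_nonneg (inv_nonneg.2 hr.le) hx), hhom _ (inv_pos.2 hr) x hx,
      ENNReal.ofReal_inv_mul_le_one_iff hr]
end
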